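/- Let q = 3, F₀ ≡ 0, and suppose 2T − |F₃|² ≤ 0 pointwise on M, with all fluxes F_p for p ∉ {1,3,5} vanishing. Then for any smooth positive functions u, v on M, the integrand (u²/2) Σ_{p} (1−p) v^{3−p} |F_p|² + ((7−q)/2) u² v^{(q−3)/2} T is pointwise ≤ 0; consequently, if the identity of Lemma (identity_al_be_vol) holds, then 4α/G_N + 6β Vol(M) ≤ 0. -/

import Mathlib

open MeasureTheory

/-- `F1sq`, `F3sq`, `F5sq` stand for `|F₁|², |F₃|², |F₅|²`; all other fluxes, `F₀` included,
vanish. -/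
noncomputable def fluxIntegrand (q u v T F1sq F3sq F5sq : ℝ) : ℝ :=
  (u ^ 2 / 2) *
      ((1 - 1) * v ^ (q - 1) * F1sq + (1 - 3) * v ^ (q - 3) * F3sq
        + (1 - 5) * v ^ (q - 5) * F5sq)
    + ((7 - q) / 2) * u ^ 2 * v ^ ((q - 3) / 2) * T

theorem fluxIntegrand_three (u v T F1sq F3sq F5sq : ℝ) :
    fluxIntegrand 3 u v T F1sq F3sq F5sq
      = u ^ 2 * (2 * T - F3sq) - 2 * u ^ 2 * (v ^ (-2 : ℝ) * F5sq) := by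
  unfold fluxIntegrand
  norm_num
  ring

theorem fluxIntegrand_three_nonpos {u v T F1sq F3sq F5sq : ℝ} (hv : 0 ≤ v) (hF5 : 0 ≤ F5sq)
    (hbal : 2 * T - F3sq ≤ 0) : fluxIntegrand 3 u v T F1sq F3sq F5sq ≤ 0 := by
  have hT : u ^ 2 * (2 * T - F3sq) ≤ 0 := mul_nonpos_of_nonneg_of_nonpos (sq_nonneg u) hbal
  have hF : 0 ≤ 2 * u ^ 2 * (v ^ (-2 : ℝ) * F5sq) := by
    have := Real.rpow_nonneg hv (-2 : ℝ)
    positivity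
  rw [fluxIntegrand_three]
  linarith

theorem nonpositive_integrand_q3_general
    {M : Type*} [MeasurableSpace M] (μ : Measure M)
    (u v : M → ℝ) (hv : ∀ x, 0 < v x)
    (T F1sq F3sq F5sq : M → ℝ)
    (hF5 : ∀ x, 0 ≤ F5sq x)
    (hbal : ∀ x, 2 * T x - F3sq x ≤ 0)
    (α β GN Vol : ℝ) :
    (∀ x,
      ((u x) ^ 2 / 2) *
          (((1 : ℝ) - 1) * (v x) ^ ((3 : ℝ) - 1) * F1sq x
            + ((1 : ℝ) - 3) * (v x) ^ ((3 : ℝ) - 3) * F3sq x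
            + ((1 : ℝ) - 5) * (v x) ^ ((3 : ℝ) - 5) * F5sq x)
        + (((7 : ℝ) - 3) / 2) * (u x) ^ 2 * (v x) ^ (((3 : ℝ) - 3) / 2) * T x ≤ 0) ∧
    ((4 * α / GN + 6 * β * Vol =
        ∫ x, (((u x) ^ 2 / 2) *
          (((1 : ℝ) - 1) * (v x) ^ ((3 : ℝ) - 1) * F1sq x
            + ((1 : ℝ) - 3) * (v x) ^ ((3 : ℝ) - 3) * F3sq x
            + ((1 : ℝ) - 5) * (v x) ^ ((3 : ℝ) - 5) * F5sq x)
          + (((7 : ℝ) - 3) / 2) * (u x) ^ 2 * (v x) ^ (((3 : ℝ) - 3) / 2) * T x) ∂μ) →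
      4 * α / GN + 6 * β * Vol ≤ 0) := by
  have hpt : ∀ x, fluxIntegrand 3 (u x) (v x) (T x) (F1sq x) (F3sq x) (F5sq x) ≤ 0 :=
    fun x => fluxIntegrand_three_nonpos (hv x).le (hF5 x) (hbal x)
  exact ⟨hpt, fun h => h ▸ integral_nonpos hpt⟩

/-- With `q = 3`, `F₀ ≡ 0`, fluxes only `F₁, F₃, F₅`, and
`2T − |F₃|² ≤ 0` pointwise, the integrand of Lemma (identity_al_be_vol) is pointwise
`≤ 0`; hence if the identity of that lemma holds then `4α/G_N + 6β Vol(M) ≤ 0`. -/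
theorem nonpositive_integrand_q3
    {M : Type*} [MeasurableSpace M] (μ : Measure M) [IsFiniteMeasure μ]
    (u v : M → ℝ) (hu : ∀ x, 0 < u x) (hv : ∀ x, 0 < v x)
    (T F1sq F3sq F5sq : M → ℝ)
    (hT : ∀ x, 0 ≤ T x) (hF1 : ∀ x, 0 ≤ F1sq x) (hF3 : ∀ x, 0 ≤ F3sq x)
    (hF5 : ∀ x, 0 ≤ F5sq x)
    (hbal : ∀ x, 2 * T x - F3sq x ≤ 0)
    (α β GN Vol : ℝ) (hGN : 0 < GN) (hVol : 0 < Vol) :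
    (∀ x,
      ((u x) ^ 2 / 2) *
          (((1 : ℝ) - 1) * (v x) ^ ((3 : ℝ) - 1) * F1sq x
            + ((1 : ℝ) - 3) * (v x) ^ ((3 : ℝ) - 3) * F3sq x
            + ((1 : ℝ) - 5) * (v x) ^ ((3 : ℝ) - 5) * F5sq x)
        + (((7 : ℝ) - 3) / 2) * (u x) ^ 2 * (v x) ^ (((3 : ℝ) - 3) / 2) * T x ≤ 0) ∧
    ((4 * α / GN + 6 * β * Vol =
        ∫ x, (((u x) ^ 2 / 2) *
          (((1 : ℝ) - 1) * (v x) ^ ((3 : ℝ) - 1) * F1sq x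
            + ((1 : ℝ) - 3) * (v x) ^ ((3 : ℝ) - 3) * F3sq x
            + ((1 : ℝ) - 5) * (v x) ^ ((3 : ℝ) - 5) * F5sq x)
          + (((7 : ℝ) - 3) / 2) * (u x) ^ 2 * (v x) ^ (((3 : ℝ) - 3) / 2) * T x) ∂μ) →
      4 * α / GN + 6 * β * Vol ≤ 0) :=
  nonpositive_integrand_q3_general μ u v hv T F1sq F3sq F5sq hF5 hbal α β GN Vol
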